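/- Let ψ ∈ T and set I := ψ(I_0). Let B_0 be the Gröbner basis of I_0 and B the Gröbner basis of I (with respect to the order <). Then: (1) B_0 is exactly the set of paths in Q that belong to I_0; (2) the map B → B_0 sending r to max(supp(r)) (maximum taken for <) is well defined and bijective; (3) for each u ∈ B_0, writing r_u ∈ B for its preimage under this map, every path in supp(r_u − u) is derived of u. -/

import Mathlib

attribute [local instance] Classical.propDecidable

/-- A quiver given by a set of vertices, a set of arrows and source/target maps. -/
structure Quiv where
  V : Type
  A : Type
  s : A → V
  t : A → V

namespace Quiv

section Basic

variable (Q : Quiv)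

/-- A (nontrivial) path is a nonempty list of composable arrows, listed in the
order they are traversed. -/
def IsPath (p : List Q.A) : Prop :=
  p ≠ [] ∧ p.Chain' (fun a b => Q.t a = Q.s b)

/-- Source of a nonempty list of arrows. -/
def src (p : List Q.A) : Option Q.V := p.head?.map Q.s

/-- Target of a nonempty list of arrows. -/
def tgt (p : List Q.A) : Option Q.V := p.getLast?.map Q.t

/-- `Q` has no oriented cycle: no nontrivial path has equal source and target. -/
def NoCycle : Prop := ∀ p, Q.IsPath p → Q.src p ≠ Q.tgt p

/-- `Q` has no multiple arrows: distinct arrows never have both the same source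
and the same target. -/
def NoMultipleArrows : Prop :=
  ∀ a b : Q.A, Q.s a = Q.s b → Q.t a = Q.t b → a = b

/-- A bypass `(α, u)`: `u` is a path parallel to the arrow `α` and distinct from it. -/
def IsBypass (α : Q.A) (u : List Q.A) : Prop :=
  Q.IsPath u ∧ Q.src u = some (Q.s α) ∧ Q.tgt u = some (Q.t α) ∧ u ≠ [α]

/-- `Repl n u v` : `v` is obtained from `u` by replacing `n` of its arrows (at
increasing positions) by bypass paths. -/
inductive Repl : ℕ → List Q.A → List Q.A → Prop
  | nil : Repl 0 [] []
  | keep (a : Q.A) {n : ℕ} {u v : List Q.A} : Repl n u v → Repl n (a :: u) (a :: v)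
  | repl {a : Q.A} {p : List Q.A} {n : ℕ} {u v : List Q.A} :
      Q.IsBypass a p → Repl n u v → Repl (n + 1) (a :: u) (p ++ v)

/-- `v` is derived of `u` of order `t`. -/
def DerivedOfOrder (t : ℕ) (u v : List Q.A) : Prop := 1 ≤ t ∧ Q.Repl t u v

/-- `v` is derived of `u` (of some order `t ≥ 1`). -/
def Derived (u v : List Q.A) : Prop := ∃ t, Q.DerivedOfOrder t u v

/-- `W(α)` : the number of bypasses of the form `(α, u)`. -/
noncomputable def Wa (α : Q.A) : ℕ := Nat.card {u : List Q.A // Q.IsBypass α u}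

/-- `W(u)` for a path `u = α_n ⋯ α_1` : the sum of the `W(α_i)`. -/
noncomputable def Wp (u : List Q.A) : ℕ := (u.map Q.Wa).sum

/-- A linear order `<` on the nontrivial paths of `Q` refining the `W`-ordering and
compatible with concatenation, as in Le Meur's Definition 2.5. -/
structure PathOrder where
  lt : List Q.A → List Q.A → Prop
  irrefl : ∀ p, Q.IsPath p → ¬ lt p p
  trans' : ∀ p q r, lt p q → lt q r → lt p r
  total' : ∀ p q, Q.IsPath p → Q.IsPath q → p ≠ q → lt p q ∨ lt q p
  wlt : ∀ p q, Q.IsPath p → Q.IsPath q → Q.Wp p < Q.Wp q → lt p q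
  concat : ∀ u u' v v' : List Q.A, lt v u → lt v' u' →
    Q.IsPath (v ++ v') → Q.IsPath (u ++ u') → lt (v ++ v') (u ++ u')

end Basic

/-- Lexicographic (strict) order on bypasses: `(α,u) < (β,v)` iff `α < β`, or
`α = β` and `u < v`. -/
def PathOrder.bplt {Q : Quiv} (o : Q.PathOrder) (b c : Q.A × List Q.A) : Prop :=
  o.lt [b.1] [c.1] ∨ (b.1 = c.1 ∧ o.lt b.2 c.2)

/-- Lexicographic non-strict order on bypasses. -/
def PathOrder.bple {Q : Quiv} (o : Q.PathOrder) (b c : Q.A × List Q.A) : Prop :=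
  o.bplt b c ∨ b = c

section Linear

variable (Q : Quiv) (k : Type) [Field k]

/-- Concatenation product on the free `k`-module on lists of arrows (the morphism
spaces of the path category `kQ`). -/
noncomputable def mulF (f g : List Q.A →₀ k) : List Q.A →₀ k :=
  f.sum fun p c => g.sum fun q d => Finsupp.single (p ++ q) (c * d)

/-- Image of the arrow `a` under the transvection `φ_{α,u,τ}`. -/
noncomputable def arrowImg (α : Q.A) (u : List Q.A) (τ : k) (a : Q.A) : List Q.A →₀ k :=
  if a = α then Finsupp.single [a] 1 + τ • Finsupp.single u 1 else Finsupp.single [a] 1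

/-- Image of a path under the transvection `φ_{α,u,τ}`. -/
noncomputable def substPoly (α : Q.A) (u : List Q.A) (τ : k) : List Q.A → (List Q.A →₀ k)
  | [] => Finsupp.single [] 1
  | a :: rest => mulF Q k (arrowImg Q k α u τ a) (substPoly α u τ rest)

/-- The transvection `φ_{α,u,τ}` as a linear endomorphism of `kQ` : it is the
`k`-linear automorphism of `kQ` fixing every vertex, sending `α` to `α + τ u`, and
fixing every other arrow. -/
noncomputable def substMap (α : Q.A) (u : List Q.A) (τ : k) :
    Module.End k (List Q.A →₀ k) :=
  Finsupp.linearCombination k (substPoly Q k α u τ)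

/-- `ψ` lies in the group `T` generated by the transvections, i.e. it is a finite
product of transvections. -/
def MemT (ψ : Module.End k (List Q.A →₀ k)) : Prop :=
  ∃ L : List (Q.A × List Q.A × k),
    (∀ x ∈ L, Q.IsBypass x.1 x.2.1) ∧
    ψ = (L.map fun x => substMap Q k x.1 x.2.1 x.2.2).prod

/-- `r'` is a subexpression of `r`. -/
def Subexpr (r' r : List Q.A →₀ k) : Prop :=
  r'.support ⊆ r.support ∧ ∀ p ∈ r'.support, r' p = r p

/-- A minimal relation of `I` : a nonzero `r ∈ I` such that `0` and `r` are the only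
subexpressions of `r` lying in `I`. -/
def IsMinimalRel (I : Submodule k (List Q.A →₀ k)) (r : List Q.A →₀ k) : Prop :=
  r ∈ I ∧ r ≠ 0 ∧ ∀ r', Subexpr Q k r' r → r' ∈ I → r' = 0 ∨ r' = r

/-- `ReplExp g u v c` : `v` is obtained from the path `u` by replacing some of its
arrows `a` (at increasing positions) by paths `w ∈ supp(g a)`, `w ≠ a`, and `c` is
the product of the corresponding coefficients `w^*(g a)`. -/
inductive ReplExp (g : Q.A → (List Q.A →₀ k)) : List Q.A → List Q.A → k → Prop
  | nil : ReplExp g [] [] 1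
  | keep (a : Q.A) {u v : List Q.A} {c : k} :
      ReplExp g u v c → ReplExp g (a :: u) (a :: v) c
  | repl (a : Q.A) {w u v : List Q.A} {c : k} :
      w ∈ (g a).support → w ≠ [a] → ReplExp g u v c →
      ReplExp g (a :: u) (w ++ v) ((g a) w * c)

/-- The homotopy relation `∼_I` on walks. A walk is a list of pairs `(a, d)` where
`a` is an arrow and `d` is `true` for `a` and `false` for the formal inverse `a⁻¹`;
the relation is the smallest equivalence relation compatible with concatenation,
cancelling `a a⁻¹` and `a⁻¹ a`, and identifying any two paths lying in the support
of a minimal relation of `I`. -/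
inductive Homotopic (I : Submodule k (List Q.A →₀ k)) :
    List (Q.A × Bool) → List (Q.A × Bool) → Prop
  | refl (w : List (Q.A × Bool)) : Homotopic I w w
  | symm {w w' : List (Q.A × Bool)} : Homotopic I w w' → Homotopic I w' w
  | trans {w w' w'' : List (Q.A × Bool)} :
      Homotopic I w w' → Homotopic I w' w'' → Homotopic I w w''
  | cancel (a : Q.A) : Homotopic I [(a, true), (a, false)] []
  | cancel' (a : Q.A) : Homotopic I [(a, false), (a, true)] []
  | rel {r : List Q.A →₀ k} (hr : IsMinimalRel Q k I r) {u v : List Q.A}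
      (hu : u ∈ r.support) (hv : v ∈ r.support) :
      Homotopic I (u.map fun a => (a, true)) (v.map fun a => (a, true))
  | congr (w x : List (Q.A × Bool)) {v v' : List (Q.A × Bool)} :
      Homotopic I v v' → Homotopic I (w ++ v ++ x) (w ++ v' ++ x)

/-- `I` is a monomial admissible ideal of `kQ` : every element is a combination of
paths of length `≥ 2`, membership is detected on supports (monomiality), and `I`
is stable under concatenation with paths on either side. -/
def IsMonomialAdmissible (I : Submodule k (List Q.A →₀ k)) : Prop :=
  (∀ r ∈ I, ∀ p ∈ (r : List Q.A →₀ k).support, Q.IsPath p ∧ 2 ≤ p.length) ∧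
  (∀ r : List Q.A →₀ k, (∀ p ∈ r.support, Finsupp.single p (1 : k) ∈ I) → r ∈ I) ∧
  (∀ r ∈ I, ∀ p ∈ (r : List Q.A →₀ k).support, Finsupp.single p (1 : k) ∈ I) ∧
  (∀ p q : List Q.A, Q.IsPath p → Finsupp.single q (1 : k) ∈ I → Q.IsPath (p ++ q) →
    Finsupp.single (p ++ q) (1 : k) ∈ I) ∧
  (∀ p q : List Q.A, Finsupp.single p (1 : k) ∈ I → Q.IsPath q → Q.IsPath (p ++ q) →
    Finsupp.single (p ++ q) (1 : k) ∈ I)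

/-- A `k`-linear automorphism of `kQ` (fixing the vertices) is the transvection
`φ_{α,u,τ}` when its underlying linear map is `substMap α u τ`. -/
def IsTransvectionE (ψ : (List Q.A →₀ k) ≃ₗ[k] (List Q.A →₀ k))
    (α : Q.A) (u : List Q.A) (τ : k) : Prop :=
  (ψ : (List Q.A →₀ k) →ₗ[k] (List Q.A →₀ k)) = substMap Q k α u τ

/-- The subgroup `T_{<(α,u)}` generated by the transvections `φ_{β,v,τ}` with
`(β,v) < (α,u)`. -/
noncomputable def TltSub (o : Q.PathOrder) (b : Q.A × List Q.A) :
    Subgroup ((List Q.A →₀ k) ≃ₗ[k] (List Q.A →₀ k)) :=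
  Subgroup.closure
    {ψ | ∃ β v τ, Q.IsBypass β v ∧ o.bplt (β, v) b ∧ IsTransvectionE Q k ψ β v τ}

/-- The subgroup `T_{≤(α,u)}` generated by the transvections `φ_{β,v,τ}` with
`(β,v) ≤ (α,u)`. -/
noncomputable def TleSub (o : Q.PathOrder) (b : Q.A × List Q.A) :
    Subgroup ((List Q.A →₀ k) ≃ₗ[k] (List Q.A →₀ k)) :=
  Subgroup.closure
    {ψ | ∃ β v τ, Q.IsBypass β v ∧ o.bple (β, v) b ∧ IsTransvectionE Q k ψ β v τ}

/-- The set `T_{(α,u)} = {φ_{α,u,τ} | τ ∈ k}`. -/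
def TsingleSet (b : Q.A × List Q.A) :
    Set ((List Q.A →₀ k) ≃ₗ[k] (List Q.A →₀ k)) :=
  {ψ | ∃ τ : k, IsTransvectionE Q k ψ b.1 b.2 τ}

/-- `m` is the `<`-maximum of the support of `r`. -/
def IsMaxPath (o : Q.PathOrder) (r : List Q.A →₀ k) (m : List Q.A) : Prop :=
  m ∈ r.support ∧ ∀ p ∈ r.support, p ≠ m → o.lt p m

/-- `B` is the Gröbner basis of the subspace `F` with respect to the path order `o` :
`B` spans `F` and each `r ∈ B` has a leading path `m` (with coefficient `1`, all other
paths of `supp r` being `<`-smaller) whose coefficient in every other element of `B`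
vanishes. -/
def IsGB (o : Q.PathOrder) (F : Submodule k (List Q.A →₀ k))
    (B : Set (List Q.A →₀ k)) : Prop :=
  B ⊆ (F : Set (List Q.A →₀ k)) ∧ Submodule.span k B = F ∧
  ∀ r ∈ B, ∃ m, m ∈ (r : List Q.A →₀ k).support ∧ r m = 1 ∧
    (∀ p ∈ (r : List Q.A →₀ k).support, p ≠ m → o.lt p m) ∧
    ∀ r' ∈ B, r' ≠ r → (r' : List Q.A →₀ k) m = 0

end Linear

variable {Q : Quiv}

section PathLemmas

theorem src_cons (a : Q.A) (u : List Q.A) : Q.src (a :: u) = some (Q.s a) := rfl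

theorem src_eq_none {p : List Q.A} : Q.src p = none ↔ p = [] := by
  cases p <;> simp [Quiv.src]

theorem tgt_eq_none {p : List Q.A} : Q.tgt p = none ↔ p = [] := by
  cases p <;> simp [Quiv.tgt]

theorem src_append {p : List Q.A} (q : List Q.A) (h : p ≠ []) :
    Q.src (p ++ q) = Q.src p := by
  unfold Quiv.src; rw [List.head?_append_of_ne_nil _ h]

theorem tgt_append (p : List Q.A) {q : List Q.A} (h : q ≠ []) :
    Q.tgt (p ++ q) = Q.tgt q := by
  unfold Quiv.tgt; rw [List.getLast?_append_of_ne_nil _ h]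

theorem tgt_cons (a : Q.A) {u : List Q.A} (h : u ≠ []) :
    Q.tgt (a :: u) = Q.tgt u := by
  have : a :: u = [a] ++ u := rfl
  rw [this, tgt_append _ h]

theorem isPath_ne_nil {p : List Q.A} (h : Q.IsPath p) : p ≠ [] := h.1

theorem isPath_single (a : Q.A) : Q.IsPath [a] := ⟨by simp, List.isChain_singleton _⟩

theorem src_eq_some {p : List Q.A} (h : p ≠ []) : ∃ x, Q.src p = some x := by
  cases p with
  | nil => exact absurd rfl h
  | cons a u => exact ⟨Q.s a, rfl⟩

theorem tgt_eq_some {p : List Q.A} (h : p ≠ []) : ∃ x, Q.tgt p = some x := by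
  have : Q.tgt p ≠ none := fun hc => h (tgt_eq_none.1 hc)
  exact Option.ne_none_iff_exists'.1 this

theorem isPath_cons_iff {a : Q.A} {u : List Q.A} (hu : u ≠ []) :
    Q.IsPath (a :: u) ↔ Q.IsPath u ∧ Q.src u = some (Q.t a) := by
  simp only [Quiv.IsPath, List.Chain']
  rw [List.isChain_cons]
  constructor
  · rintro ⟨-, h1, h2⟩
    refine ⟨⟨hu, h2⟩, ?_⟩
    obtain ⟨b, hb⟩ : ∃ b, u.head? = some b := by
      cases u with
      | nil => exact absurd rfl hu
      | cons b v => exact ⟨b, rfl⟩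
    have := h1 b hb
    unfold Quiv.src
    rw [hb, Option.map_some, this]
  · rintro ⟨⟨-, h2⟩, hs⟩
    refine ⟨by simp, ?_, h2⟩
    intro y hy
    unfold Quiv.src at hs
    rw [hy] at hs
    simpa using hs.symm

theorem isPath_append {p q : List Q.A} (hp : Q.IsPath p) (hq : Q.IsPath q)
    (h : Q.tgt p = Q.src q) : Q.IsPath (p ++ q) := by
  refine ⟨by simp [hp.1], List.isChain_append.2 ⟨hp.2, hq.2, ?_⟩⟩
  intro x hx y hy
  unfold Quiv.tgt Quiv.src at h
  rw [hx, hy] at h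
  simpa using h

theorem isPath_append_iff {p q : List Q.A} (hp : p ≠ []) (hq : q ≠ []) :
    Q.IsPath (p ++ q) ↔ Q.IsPath p ∧ Q.IsPath q ∧ Q.tgt p = Q.src q := by
  constructor
  · rintro ⟨-, hc⟩
    simp only [List.Chain'] at hc
    rw [List.isChain_append] at hc
    obtain ⟨h1, h2, h3⟩ := hc
    refine ⟨⟨hp, h1⟩, ⟨hq, h2⟩, ?_⟩
    obtain ⟨x, hx⟩ : ∃ x, p.getLast? = some x := by
      have := List.getLast?_eq_getLast hp
      exact ⟨_, this⟩
    obtain ⟨y, hy⟩ : ∃ y, q.head? = some y := by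
      cases q with
      | nil => exact absurd rfl hq
      | cons b v => exact ⟨b, rfl⟩
    unfold Quiv.tgt Quiv.src
    rw [hx, hy, Option.map_some, Option.map_some, h3 x hx y hy]
  · rintro ⟨h1, h2, h3⟩
    exact isPath_append h1 h2 h3

end PathLemmas

section ReplLemmas

theorem Repl.refl : ∀ (u : List Q.A), Q.Repl 0 u u
  | [] => Repl.nil
  | a :: u => Repl.keep a (Repl.refl u)

theorem repl_nil_left {n : ℕ} {v : List Q.A} (h : Q.Repl n [] v) : n = 0 ∧ v = [] := by
  cases h; exact ⟨rfl, rfl⟩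

theorem repl_src {n : ℕ} {u v : List Q.A} (h : Q.Repl n u v) : Q.src v = Q.src u := by
  induction h with
  | nil => rfl
  | keep a h ih => rfl
  | @repl a p n u v hb h ih =>
      rw [src_append _ (isPath_ne_nil hb.1), hb.2.1, src_cons]

theorem repl_nil_iff {n : ℕ} {u v : List Q.A} (h : Q.Repl n u v) : (u = [] ↔ v = []) := by
  have := repl_src h
  constructor
  · intro h'; subst h'; exact src_eq_none.1 (by rw [this]; exact src_eq_none.2 rfl)
  · intro h'; subst h'; exact src_eq_none.1 (by rw [← this]; exact src_eq_none.2 rfl)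

theorem repl_tgt {n : ℕ} {u v : List Q.A} (h : Q.Repl n u v) : Q.tgt v = Q.tgt u := by
  induction h with
  | nil => rfl
  | @keep a n u v h ih =>
      by_cases hu : u = []
      · subst hu
        have hv : v = [] := (repl_nil_iff h).1 rfl
        subst hv; rfl
      · have hv : v ≠ [] := fun hc => hu ((repl_nil_iff h).2 hc)
        rw [tgt_cons _ hv, tgt_cons _ hu, ih]
  | @repl a p n u v hb h ih =>
      by_cases hu : u = []
      · subst hu
        have hv : v = [] := (repl_nil_iff h).1 rfl
        subst hv
        simp only [List.append_nil]
        rw [hb.2.2.1]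
        rfl
      · have hv : v ≠ [] := fun hc => hu ((repl_nil_iff h).2 hc)
        rw [tgt_append _ hv, ih, tgt_cons _ hu]

theorem repl_isPath {n : ℕ} {u v : List Q.A} (h : Q.Repl n u v) (hu : Q.IsPath u) :
    Q.IsPath v := by
  induction h with
  | nil => exact hu
  | @keep a n u v h ih =>
      by_cases hu' : u = []
      · subst hu'
        have hv : v = [] := (repl_nil_iff h).1 rfl
        subst hv; exact hu
      · have hv : v ≠ [] := fun hc => hu' ((repl_nil_iff h).2 hc)
        obtain ⟨h1, h2⟩ := (isPath_cons_iff hu').1 hu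
        refine (isPath_cons_iff hv).2 ⟨ih h1, ?_⟩
        rw [repl_src h, h2]
  | @repl a p n u v hb h ih =>
      by_cases hu' : u = []
      · subst hu'
        have hv : v = [] := (repl_nil_iff h).1 rfl
        subst hv
        simpa using hb.1
      · have hv : v ≠ [] := fun hc => hu' ((repl_nil_iff h).2 hc)
        obtain ⟨h1, h2⟩ := (isPath_cons_iff hu').1 hu
        refine isPath_append hb.1 (ih h1) ?_
        rw [repl_src h, h2, hb.2.2.1]

theorem repl_append {n m : ℕ} {u v x y : List Q.A} (h1 : Q.Repl n u x) (h2 : Q.Repl m v y) :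
    Q.Repl (n + m) (u ++ v) (x ++ y) := by
  induction h1 with
  | nil => simpa using h2
  | keep a h ih => exact Repl.keep a ih
  | @repl a p n u x hb h ih =>
      have heq : n + 1 + m = n + m + 1 := by omega
      rw [heq, List.append_assoc]
      exact Repl.repl hb ih

theorem repl_append_split {n : ℕ} {u v w : List Q.A} (h : Q.Repl n (u ++ v) w) :
    ∃ n₁ n₂ w₁ w₂, n = n₁ + n₂ ∧ w = w₁ ++ w₂ ∧ Q.Repl n₁ u w₁ ∧ Q.Repl n₂ v w₂ := by
  induction u generalizing n w with
  | nil => exact ⟨0, n, [], w, by omega, rfl, Repl.nil, h⟩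
  | cons a u ih =>
      cases h with
      | keep _ h =>
          obtain ⟨n₁, n₂, w₁, w₂, rfl, rfl, hh1, hh2⟩ := ih h
          exact ⟨n₁, n₂, a :: w₁, w₂, rfl, rfl, Repl.keep a hh1, hh2⟩
      | @repl _ p n' _ w' hb h =>
          obtain ⟨n₁, n₂, w₁, w₂, rfl, rfl, hh1, hh2⟩ := ih h
          exact ⟨n₁ + 1, n₂, p ++ w₁, w₂, by omega, by simp, Repl.repl hb hh1, hh2⟩

theorem bypass_two_le (hnm : Q.NoMultipleArrows) {a : Q.A} {u : List Q.A}
    (hb : Q.IsBypass a u) : 2 ≤ u.length := by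
  obtain ⟨hp, hs, ht, hne⟩ := hb
  match u, hp.1 with
  | [b], _ =>
      exfalso
      apply hne
      have hsb : Q.s b = Q.s a := by
        have : Q.src [b] = some (Q.s b) := rfl
        rw [this] at hs; exact Option.some_injective _ hs
      have htb : Q.t b = Q.t a := by
        have : Q.tgt [b] = some (Q.t b) := rfl
        rw [this] at ht; exact Option.some_injective _ ht
      rw [hnm b a hsb htb]
  | (b :: c :: u), _ => simp
  | [], h => exact absurd rfl h

theorem repl_length (hnm : Q.NoMultipleArrows) {n : ℕ} {u v : List Q.A}
    (h : Q.Repl n u v) : u.length + n ≤ v.length := by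
  induction h with
  | nil => simp
  | keep a h ih => simp only [List.length_cons]; omega
  | @repl a p n u v hb h ih =>
      have := bypass_two_le hnm hb
      simp only [List.length_cons, List.length_append]
      omega

theorem repl_zero {u v : List Q.A} (h : Q.Repl 0 u v) : v = u := by
  generalize hn : 0 = n at h
  induction h with
  | nil => rfl
  | keep a h ih => rw [ih hn]
  | repl hb h ih => omega

theorem repl_bypass (hnm : Q.NoMultipleArrows) {a : Q.A} {m : ℕ} {w r : List Q.A}
    (hb : Q.IsBypass a w) (h : Q.Repl m w r) : Q.IsBypass a r := by
  refine ⟨repl_isPath h hb.1, by rw [repl_src h, hb.2.1], by rw [repl_tgt h, hb.2.2.1], ?_⟩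
  intro hc
  have h1 := repl_length hnm h
  have h2 := bypass_two_le hnm hb
  rw [hc] at h1
  simp at h1
  omega

theorem repl_trans (hnm : Q.NoMultipleArrows) {n m : ℕ} {u v r : List Q.A}
    (h1 : Q.Repl n u v) (h2 : Q.Repl m v r) : ∃ j, n ≤ j ∧ Q.Repl j u r := by
  induction h1 generalizing m r with
  | nil =>
      obtain ⟨rfl, rfl⟩ := repl_nil_left h2
      exact ⟨0, le_refl _, Repl.nil⟩
  | @keep a n u v h ih =>
      cases h2 with
      | keep _ h2 =>
          obtain ⟨j, hj, hr⟩ := ih h2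
          exact ⟨j, hj, Repl.keep a hr⟩
      | repl hb h2 =>
          obtain ⟨j, hj, hr⟩ := ih h2
          exact ⟨j + 1, by omega, Repl.repl hb hr⟩
  | @repl a p n u v hb h ih =>
      obtain ⟨m₁, m₂, w₁, w₂, rfl, rfl, hh1, hh2⟩ := repl_append_split h2
      obtain ⟨j, hj, hr⟩ := ih hh2
      exact ⟨j + 1, by omega, Repl.repl (repl_bypass hnm hb hh1) hr⟩

theorem derived_trans (hnm : Q.NoMultipleArrows) {u v r : List Q.A}
    (h1 : Q.Derived u v) (h2 : Q.Derived v r) : Q.Derived u r := by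
  obtain ⟨n, hn, h1⟩ := h1
  obtain ⟨m, hm, h2⟩ := h2
  obtain ⟨j, hj, hr⟩ := repl_trans hnm h1 h2
  exact ⟨j, le_trans hn hj, hr⟩

end ReplLemmas

section Finiteness

variable {Q : Quiv}

theorem isPath_infix {p m : List Q.A} (hp : Q.IsPath p) (hm : m ≠ []) (hinf : m <:+: p) :
    Q.IsPath m := ⟨hm, hp.2.infix hinf⟩

theorem isPath_nodup (hnc : Q.NoCycle) {p : List Q.A} (hp : Q.IsPath p) : p.Nodup := by
  by_contra hnd
  obtain ⟨x, hdup⟩ := List.exists_duplicate_iff_not_nodup.2 hnd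
  have hsub : List.Sublist [x, x] p := List.duplicate_iff_sublist.1 hdup
  rw [List.cons_sublist_iff] at hsub
  obtain ⟨r₁, r₂, hp12, hx1, hx2⟩ := hsub
  have hx2' : x ∈ r₂ := hx2.subset (List.mem_singleton_self x)
  obtain ⟨c, d, hr1⟩ := List.append_of_mem hx1
  obtain ⟨e, f, hr2⟩ := List.append_of_mem hx2'
  set m : List Q.A := x :: (d ++ e) with hm
  have hpe : p = (c ++ m) ++ (x :: f) := by
    rw [hp12, hr1, hr2, hm]; simp
  have hmne : m ≠ [] := by simp [hm]
  have hmpath : Q.IsPath m := by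
    refine isPath_infix hp hmne ⟨c, x :: f, ?_⟩
    rw [hpe]
  have hchain := hp.2
  rw [hpe] at hchain
  simp only [List.Chain'] at hchain
  rw [List.isChain_append] at hchain
  obtain ⟨-, -, hlink⟩ := hchain
  have hlast : (c ++ m).getLast? = m.getLast? := List.getLast?_append_of_ne_nil _ hmne
  obtain ⟨lm, hlm⟩ : ∃ lm, m.getLast? = some lm := ⟨m.getLast hmne, List.getLast?_eq_getLast hmne⟩
  have hts : Q.t lm = Q.s x := hlink lm (by rw [hlast, hlm]; exact rfl) x rfl
  have : Q.src m = Q.tgt m := by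
    have h1 : Q.src m = some (Q.s x) := rfl
    have h2 : Q.tgt m = some (Q.t lm) := by unfold Quiv.tgt; rw [hlm, Option.map_some]
    rw [h1, h2, hts]
  exact hnc m hmpath this

theorem paths_finite (hnc : Q.NoCycle) [Fintype Q.A] : {p : List Q.A | Q.IsPath p}.Finite := by
  apply Set.Finite.subset (List.finite_length_le Q.A (Fintype.card Q.A))
  intro p hp
  exact (isPath_nodup hnc hp).length_le_card

theorem bypass_finite (hnc : Q.NoCycle) [Fintype Q.A] (a : Q.A) :
    {w : List Q.A | Q.IsBypass a w}.Finite :=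
  (paths_finite hnc).subset fun w hw => hw.1

theorem bypass_head_ne (hnc : Q.NoCycle) {a : Q.A} {w : List Q.A} (hb : Q.IsBypass a w) :
    w.head? ≠ some a := by
  intro hc
  obtain ⟨hp, hs, ht, hne⟩ := hb
  obtain ⟨b, m, rfl⟩ : ∃ b m, w = b :: m := by
    cases w with
    | nil => exact absurd rfl hp.1
    | cons b m => exact ⟨b, m, rfl⟩
  have hba : b = a := by simpa using hc
  subst hba
  have hmne : m ≠ [] := by rintro rfl; exact hne rfl
  obtain ⟨hmp, hms⟩ := (isPath_cons_iff hmne).1 hp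
  apply hnc m hmp
  rw [hms, ← tgt_cons b hmne, ht]

theorem sum_map_get {β : Type*} (g : β → ℕ) :
    ∀ (l : List β), (l.map g).sum = ∑ i : Fin l.length, g (l.get i)
  | [] => by simp
  | b :: l => by
      have h : ∑ i : Fin (b :: l).length, g ((b :: l).get i)
          = g b + ∑ i : Fin l.length, g (l.get i) := Fin.sum_univ_succ _
      rw [List.map_cons, List.sum_cons, sum_map_get g l, h]

theorem Wa_eq_card (hnc : Q.NoCycle) [Fintype Q.A] (a : Q.A) :
    Q.Wa a = ((bypass_finite hnc a).toFinset).card := by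
  rw [Quiv.Wa]
  have : {w : List Q.A // Q.IsBypass a w} = ↥{w : List Q.A | Q.IsBypass a w} := rfl
  rw [this, Nat.card_coe_set_eq, Set.ncard_eq_toFinset_card _ (bypass_finite hnc a)]

theorem W_lt (hnc : Q.NoCycle) (hnm : Q.NoMultipleArrows) [Fintype Q.A]
    {α : Q.A} {u : List Q.A} (hb : Q.IsBypass α u) : Q.Wp u < Q.Wa α := by
  classical
  have decomp : ∀ i : Fin u.length, u = u.take i.1 ++ u.get i :: u.drop (i.1 + 1) := by
    intro i
    conv_lhs => rw [← List.take_append_drop i.1 u]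
    rw [List.drop_eq_getElem_cons i.2, List.get_eq_getElem]
  have hrepl : ∀ (i : Fin u.length) (w : List Q.A), Q.IsBypass (u.get i) w →
      Q.Repl 1 u (u.take i.1 ++ w ++ u.drop (i.1 + 1)) := by
    intro i w hw
    have h2 : Q.Repl 1 (u.get i :: u.drop (i.1 + 1)) (w ++ u.drop (i.1 + 1)) :=
      Repl.repl hw (Repl.refl _)
    have h3 := repl_append (Repl.refl (u.take i.1)) h2
    rw [← decomp i] at h3
    rw [List.append_assoc]
    exact h3
  have key : ∀ (i j : Fin u.length) (w w' : List Q.A), Q.IsBypass (u.get i) w →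
      (u.take i.1 ++ w ++ u.drop (i.1 + 1)) = (u.take j.1 ++ w' ++ u.drop (j.1 + 1)) →
      i.1 < j.1 → False := by
    intro i j w w' hwB heq hij
    have hwne : w ≠ [] := hwB.1.1
    have hjlen : (u.take j.1).length = j.1 := by
      rw [List.length_take]; omega
    have hilen : (u.take i.1).length = i.1 := by
      rw [List.length_take]; omega
    have hL : (u.take i.1 ++ w ++ u.drop (i.1 + 1)).drop i.1 = w ++ u.drop (i.1 + 1) := by
      rw [List.append_assoc]
      exact List.drop_left' hilen
    have hR : ((u.take j.1 ++ w' ++ u.drop (j.1 + 1)).drop i.1).head? = some (u.get i) := by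
      rw [List.append_assoc, List.drop_append_of_le_length (by omega)]
      have hne : (u.take j.1).drop i.1 ≠ [] := by
        intro hc
        have := congrArg List.length hc
        rw [List.length_drop, hjlen] at this
        simp at this
        omega
      rw [List.head?_append_of_ne_nil _ hne, List.head?_drop, List.getElem?_take,
        if_pos hij, List.getElem?_eq_getElem i.2, List.get_eq_getElem]
    have hfin : w.head? = some (u.get i) := by
      have h5 : ((u.take i.1 ++ w ++ u.drop (i.1 + 1)).drop i.1).head? = some (u.get i) := by
        rw [heq]; exact hR
      rw [hL, List.head?_append_of_ne_nil _ hwne] at h5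
      exact h5
    exact bypass_head_ne hnc hwB hfin
  have bfin : ∀ a : Q.A, {w : List Q.A | Q.IsBypass a w}.Finite := bypass_finite hnc
  let F : Q.A → Finset (List Q.A) := fun a => (bfin a).toFinset
  have hFmem : ∀ (a : Q.A) (w : List Q.A), w ∈ F a ↔ Q.IsBypass a w := by
    intro a w; exact Set.Finite.mem_toFinset _
  let T : Finset (Σ _i : Fin u.length, List Q.A) :=
    (Finset.univ : Finset (Fin u.length)).sigma (fun i => F (u.get i))
  have hTmem : ∀ (i : Fin u.length) (w : List Q.A),
      (Sigma.mk i w) ∈ T ↔ Q.IsBypass (u.get i) w := by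
    intro i w
    rw [Finset.mem_sigma]
    constructor
    · intro h; exact (hFmem _ _).1 h.2
    · intro h; exact ⟨Finset.mem_univ _, (hFmem _ _).2 h⟩
  let f : (Σ _i : Fin u.length, List Q.A) → List Q.A :=
    fun x => u.take x.1.1 ++ x.2 ++ u.drop (x.1.1 + 1)
  have hmem : ∀ x ∈ T, f x ∈ (F α).erase u := by
    rintro ⟨i, w⟩ hx
    have hw : Q.IsBypass (u.get i) w := (hTmem i w).1 hx
    have hrep := hrepl i w hw
    have hbyp : Q.IsBypass α (u.take i.1 ++ w ++ u.drop (i.1 + 1)) := repl_bypass hnm hb hrep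
    refine Finset.mem_erase.2 ⟨?_, (hFmem _ _).2 hbyp⟩
    intro hc
    have hlen := repl_length hnm hrep
    show False
    rw [show f ⟨i, w⟩ = u.take i.1 ++ w ++ u.drop (i.1 + 1) from rfl] at hc
    rw [hc] at hlen
    omega
  have hinj : Set.InjOn f ↑T := by
    rintro ⟨i, w⟩ hx ⟨j, w'⟩ hy heq
    have hx' : Q.IsBypass (u.get i) w := (hTmem i w).1 (by simpa using hx)
    have hy' : Q.IsBypass (u.get j) w' := (hTmem j w').1 (by simpa using hy)
    have heq' : (u.take i.1 ++ w ++ u.drop (i.1 + 1)) = (u.take j.1 ++ w' ++ u.drop (j.1 + 1)) := heq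
    rcases lt_trichotomy i.1 j.1 with h | h | h
    · exact absurd (key i j w w' hx' heq' h) (fun x => x)
    · have hij : i = j := Fin.ext h
      subst hij
      have hww : w = w' := by
        apply List.append_cancel_right (bs := u.drop (i.1 + 1))
        apply List.append_cancel_left (as := u.take i.1)
        rw [← List.append_assoc, ← List.append_assoc]
        exact heq'
      rw [hww]
    · exact absurd (key j i w' w hy' heq'.symm h) (fun x => x)
  have hcard : T.card ≤ ((F α).erase u).card := Finset.card_le_card_of_injOn f hmem hinj
  have hTcard : T.card = Q.Wp u := by
    show ((Finset.univ : Finset (Fin u.length)).sigma (fun i => F (u.get i))).card = _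
    rw [Finset.card_sigma, Quiv.Wp, sum_map_get]
    congr 1
    ext i
    rw [Wa_eq_card hnc]
  have huF : u ∈ F α := (hFmem _ _).2 hb
  have herase : ((F α).erase u).card = (F α).card - 1 := Finset.card_erase_of_mem huF
  have hpos : 0 < (F α).card := Finset.card_pos.2 ⟨u, huF⟩
  have hWa : Q.Wa α = (F α).card := by rw [Wa_eq_card hnc]
  omega

theorem repl_Wp (hnc : Q.NoCycle) (hnm : Q.NoMultipleArrows) [Fintype Q.A]
    {n : ℕ} {u v : List Q.A} (h : Q.Repl n u v) : Q.Wp v + n ≤ Q.Wp u := by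
  induction h with
  | nil => simp
  | @keep a n u v h ih =>
      simp only [Quiv.Wp, List.map_cons, List.sum_cons] at *
      omega
  | @repl a p n u v hb h ih =>
      have hW := W_lt hnc hnm hb
      simp only [Quiv.Wp, List.map_cons, List.sum_cons, List.map_append, List.sum_append] at *
      omega

theorem derived_isPath {u v : List Q.A} (hu : Q.IsPath u) (h : Q.Derived u v) :
    Q.IsPath v := by
  obtain ⟨n, -, h⟩ := h
  exact repl_isPath h hu

theorem derived_lt (hnc : Q.NoCycle) (hnm : Q.NoMultipleArrows) [Fintype Q.A]
    (o : Q.PathOrder) {u v : List Q.A} (hu : Q.IsPath u) (h : Q.Derived u v) :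
    o.lt v u := by
  obtain ⟨n, hn, hr⟩ := h
  have h1 := repl_Wp hnc hnm hr
  exact o.wlt v u (repl_isPath hr hu) hu (by omega)

theorem derived_ne {u v : List Q.A} (hnm : Q.NoMultipleArrows) (h : Q.Derived u v) : v ≠ u := by
  obtain ⟨n, hn, hr⟩ := h
  have := repl_length hnm hr
  intro hc
  rw [hc] at this
  omega

end Finiteness
section SubstLemmas

variable {Q : Quiv} {k : Type} [Field k]

theorem mulF_single_single (p q : List Q.A) (c d : k) :
    mulF Q k (Finsupp.single p c) (Finsupp.single q d) = Finsupp.single (p ++ q) (c * d) := by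
  unfold mulF
  rw [Finsupp.sum_single_index, Finsupp.sum_single_index]
  · rw [mul_zero, Finsupp.single_zero]
  · rw [Finsupp.sum_single_index]
    · rw [zero_mul, Finsupp.single_zero]
    · rw [zero_mul, Finsupp.single_zero]

theorem mulF_single_left (p : List Q.A) (c : k) (g : List Q.A →₀ k) :
    mulF Q k (Finsupp.single p c) g = g.sum fun q d => Finsupp.single (p ++ q) (c * d) := by
  unfold mulF
  apply Finsupp.sum_single_index
  simp

theorem mulF_add_left (f₁ f₂ g : List Q.A →₀ k) :
    mulF Q k (f₁ + f₂) g = mulF Q k f₁ g + mulF Q k f₂ g := by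
  unfold mulF
  apply Finsupp.sum_add_index'
  · intro p
    simp
  · intro p c₁ c₂
    rw [← Finsupp.sum_add]
    congr 1
    ext q d
    rw [add_mul, Finsupp.single_add]

theorem mulF_single_add_right (p : List Q.A) (c : k) (g₁ g₂ : List Q.A →₀ k) :
    mulF Q k (Finsupp.single p c) (g₁ + g₂) =
      mulF Q k (Finsupp.single p c) g₁ + mulF Q k (Finsupp.single p c) g₂ := by
  rw [mulF_single_left, mulF_single_left, mulF_single_left]
  apply Finsupp.sum_add_index'
  · intro q
    rw [mul_zero, Finsupp.single_zero]
  · intro q d₁ d₂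
    rw [mul_add, Finsupp.single_add]

theorem support_mulF_single (p : List Q.A) (c : k) (g : List Q.A →₀ k) {q : List Q.A}
    (hq : q ∈ (mulF Q k (Finsupp.single p c) g).support) :
    c ≠ 0 ∧ ∃ q₂ ∈ g.support, q = p ++ q₂ := by
  classical
  rw [mulF_single_left] at hq
  have := Finsupp.support_sum hq
  rw [Finset.mem_biUnion] at this
  obtain ⟨q₂, hq₂, hmem⟩ := this
  have hsub := Finsupp.support_single_subset hmem
  rw [Finset.mem_singleton] at hsub
  subst hsub
  refine ⟨?_, q₂, hq₂, rfl⟩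
  intro hc
  subst hc
  rw [zero_mul, Finsupp.single_zero] at hmem
  simp at hmem

theorem arrowImg_eq (α : Q.A) (u : List Q.A) (τ : k) (a : Q.A) :
    arrowImg Q k α u τ a =
      Finsupp.single [a] (1 : k) + Finsupp.single u (if a = α then τ else 0) := by
  unfold arrowImg
  by_cases h : a = α
  · rw [if_pos h, if_pos h, Finsupp.smul_single', mul_one]
  · rw [if_neg h, if_neg h, Finsupp.single_zero, add_zero]

theorem substPoly_structure (hnm : Q.NoMultipleArrows) {α : Q.A} {u : List Q.A}
    (hb : Q.IsBypass α u) (τ : k) (p : List Q.A) :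
    ∃ E : List Q.A →₀ k, substPoly Q k α u τ p = Finsupp.single p 1 + E ∧
      ∀ q ∈ E.support, ∃ n, 1 ≤ n ∧ Q.Repl n p q := by
  classical
  induction p with
  | nil =>
      refine ⟨0, by rw [add_zero]; rfl, ?_⟩
      intro q hq
      simp at hq
  | cons a rest ih =>
      obtain ⟨E, hE, hEsupp⟩ := ih
      set τ₀ : k := if a = α then τ else 0 with hτ₀
      have hτ₀' : τ₀ ≠ 0 → a = α := by
        intro h
        by_contra hc
        rw [hτ₀, if_neg hc] at h
        exact h rfl
      have hstep : substPoly Q k α u τ (a :: rest) =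
          Finsupp.single (a :: rest) (1 : k) +
            (Finsupp.single (u ++ rest) τ₀ +
              (mulF Q k (Finsupp.single [a] (1:k)) E + mulF Q k (Finsupp.single u τ₀) E)) := by
        show mulF Q k (arrowImg Q k α u τ a) (substPoly Q k α u τ rest) = _
        rw [arrowImg_eq, hE, mulF_add_left, mulF_single_add_right, mulF_single_add_right,
          mulF_single_single, mulF_single_single, one_mul, mul_one]
        have h1 : ([a] : List Q.A) ++ rest = a :: rest := rfl
        rw [h1]
        abel
      refine ⟨_, hstep, ?_⟩
      intro q hq
      have hq' := Finsupp.support_add hq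
      rw [Finset.mem_union] at hq'
      rcases hq' with hq' | hq'
      · have h1 := Finsupp.support_single_subset hq'
        rw [Finset.mem_singleton] at h1
        subst h1
        have hne : τ₀ ≠ 0 := by
          intro hc
          rw [hc, Finsupp.single_zero] at hq'
          simp at hq'
        have ha : a = α := hτ₀' hne
        subst ha
        exact ⟨1, le_refl _, Repl.repl hb (Repl.refl rest)⟩
      · have hq'' := Finsupp.support_add hq'
        rw [Finset.mem_union] at hq''
        rcases hq'' with hq'' | hq''
        · obtain ⟨-, q₂, hq₂, rfl⟩ := support_mulF_single _ _ _ hq''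
          obtain ⟨n, hn, hr⟩ := hEsupp q₂ hq₂
          exact ⟨n, hn, Repl.keep a hr⟩
        · obtain ⟨hne, q₂, hq₂, rfl⟩ := support_mulF_single _ _ _ hq''
          have ha : a = α := hτ₀' hne
          subst ha
          obtain ⟨n, hn, hr⟩ := hEsupp q₂ hq₂
          exact ⟨n + 1, by omega, Repl.repl hb hr⟩

theorem substMap_single (α : Q.A) (u : List Q.A) (τ : k) (p : List Q.A) :
    substMap Q k α u τ (Finsupp.single p 1) = substPoly Q k α u τ p := by
  unfold substMap
  rw [Finsupp.linearCombination_single, one_smul]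

theorem memT_structure (hnm : Q.NoMultipleArrows) {ψ : Module.End k (List Q.A →₀ k)}
    (hψ : MemT Q k ψ) (p : List Q.A) :
    ∃ E : List Q.A →₀ k, ψ (Finsupp.single p 1) = Finsupp.single p 1 + E ∧
      ∀ q ∈ E.support, Q.Derived p q := by
  classical
  obtain ⟨L, hL, rfl⟩ := hψ
  induction L with
  | nil =>
      refine ⟨0, ?_, ?_⟩
      · rw [add_zero]
        rfl
      · intro q hq; simp at hq
  | cons x L ih =>
      obtain ⟨E', hE', hE'supp⟩ := ih (fun y hy => hL y (List.mem_cons_of_mem x hy))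
      have hbx : Q.IsBypass x.1 x.2.1 := hL x (List.mem_cons_self)
      rw [List.map_cons, List.prod_cons]
      rw [Module.End.mul_apply, hE', map_add, substMap_single]
      obtain ⟨E₀, hE₀, hE₀supp⟩ := substPoly_structure hnm hbx x.2.2 p
      rw [hE₀]
      refine ⟨E₀ + substMap Q k x.1 x.2.1 x.2.2 E', by abel, ?_⟩
      intro q hq
      have hq' := Finsupp.support_add hq
      rw [Finset.mem_union] at hq'
      rcases hq' with hq' | hq'
      · obtain ⟨n, hn, hr⟩ := hE₀supp q hq'
        exact ⟨n, hn, hr⟩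
      · unfold substMap at hq'
        rw [Finsupp.linearCombination_apply] at hq'
        have := Finsupp.support_sum hq'
        rw [Finset.mem_biUnion] at this
        obtain ⟨w, hw, hmem⟩ := this
        have hwd : Q.Derived p w := hE'supp w hw
        have hmem' : q ∈ (substPoly Q k x.1 x.2.1 x.2.2 w).support :=
          Finsupp.support_smul hmem
        obtain ⟨Ew, hEw, hEwsupp⟩ := substPoly_structure hnm hbx x.2.2 w
        rw [hEw] at hmem'
        have hq'' := Finsupp.support_add hmem'
        rw [Finset.mem_union] at hq''
        rcases hq'' with hq'' | hq''
        · have h1 := Finsupp.support_single_subset hq''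
          rw [Finset.mem_singleton] at h1
          subst h1
          exact hwd
        · obtain ⟨n, hn, hr⟩ := hEwsupp q hq''
          exact derived_trans hnm hwd ⟨n, hn, hr⟩

theorem memT_coeff_self (hnm : Q.NoMultipleArrows) {ψ : Module.End k (List Q.A →₀ k)}
    (hψ : MemT Q k ψ) (p : List Q.A) :
    (ψ (Finsupp.single p 1)) p = 1 := by
  obtain ⟨E, hE, hEsupp⟩ := memT_structure hnm hψ p
  rw [hE, Finsupp.add_apply, Finsupp.single_eq_same]
  have : E p = 0 := by
    by_contra hc
    have hp : p ∈ E.support := Finsupp.mem_support_iff.2 hc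
    exact derived_ne hnm (hEsupp p hp) rfl
  rw [this, add_zero]

end SubstLemmas
section OrderLemmas

variable {Q : Quiv}

theorem lt_antisym (o : Q.PathOrder) {p q : List Q.A} (hp : Q.IsPath p)
    (h1 : p = q ∨ o.lt p q) (h2 : q = p ∨ o.lt q p) : p = q := by
  rcases h1 with h1 | h1
  · exact h1
  · rcases h2 with h2 | h2
    · exact h2.symm
    · exact absurd (o.trans' p q p h1 h2) (o.irrefl p hp)

theorem exists_max_path (o : Q.PathOrder) (s : Finset (List Q.A)) :
    s.Nonempty → (∀ p ∈ s, Q.IsPath p) → ∃ m ∈ s, ∀ p ∈ s, p ≠ m → o.lt p m := by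
  classical
  induction s using Finset.induction_on with
  | empty => intro h; exact absurd h (by simp)
  | @insert a s ha ih =>
      intro _ hpaths
      by_cases hs : s.Nonempty
      · obtain ⟨m, hm, hmax⟩ := ih hs (fun p hp => hpaths p (Finset.mem_insert_of_mem hp))
        have ham : a ≠ m := fun hc => ha (hc ▸ hm)
        have hpa : Q.IsPath a := hpaths a (Finset.mem_insert_self a s)
        have hpm : Q.IsPath m := hpaths m (Finset.mem_insert_of_mem hm)
        rcases o.total' a m hpa hpm ham with h | h
        · refine ⟨m, Finset.mem_insert_of_mem hm, ?_⟩
          intro p hp hpn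
          rcases Finset.mem_insert.1 hp with rfl | hp
          · exact h
          · exact hmax p hp hpn
        · refine ⟨a, Finset.mem_insert_self a s, ?_⟩
          intro p hp hpn
          rcases Finset.mem_insert.1 hp with rfl | hp
          · exact absurd rfl hpn
          · by_cases hpm' : p = m
            · exact hpm' ▸ h
            · exact o.trans' p m a (hmax p hp hpm') h
      · rw [Finset.not_nonempty_iff_eq_empty] at hs
        subst hs
        refine ⟨a, Finset.mem_insert_self a ∅, ?_⟩
        intro p hp hpn
        rcases Finset.mem_insert.1 hp with rfl | hp
        · exact absurd rfl hpn
        · simp at hp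

end OrderLemmas

section MainLemmas

variable {Q : Quiv} {k : Type} [Field k]

/-- Decomposition of an element of `ψ(I₀)`. -/
theorem I_decomp {I₀ : Submodule k (List Q.A →₀ k)} (hI₀ : IsMonomialAdmissible Q k I₀)
    {ψ : Module.End k (List Q.A →₀ k)} {x : List Q.A →₀ k}
    (hx : x ∈ Submodule.map ψ I₀) :
    ∃ y : List Q.A →₀ k,
      (∀ u ∈ y.support, Q.IsPath u ∧ Finsupp.single u (1 : k) ∈ I₀) ∧
      x = ∑ u ∈ y.support, y u • ψ (Finsupp.single u 1) := by
  obtain ⟨y, hy, rfl⟩ := hx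
  refine ⟨y, ?_, ?_⟩
  · intro u hu
    exact ⟨(hI₀.1 y hy u hu).1, hI₀.2.2.1 y hy u hu⟩
  · have hrep : y = ∑ u ∈ y.support, y u • Finsupp.single u (1 : k) := by
      conv_lhs => rw [← Finsupp.sum_single y]
      show (∑ u ∈ y.support, Finsupp.single u (y u)) = _
      apply Finset.sum_congr rfl
      intro u _
      rw [Finsupp.smul_single', mul_one]
    conv_lhs => rw [hrep]
    rw [map_sum]
    apply Finset.sum_congr rfl
    intro u _
    rw [map_smul]

/-- Supports of elements of `ψ(I₀)` consist of paths. -/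
theorem I_support_path (hnm : Q.NoMultipleArrows)
    {I₀ : Submodule k (List Q.A →₀ k)} (hI₀ : IsMonomialAdmissible Q k I₀)
    {ψ : Module.End k (List Q.A →₀ k)} (hψ : MemT Q k ψ) {x : List Q.A →₀ k}
    (hx : x ∈ Submodule.map ψ I₀) : ∀ p ∈ x.support, Q.IsPath p := by
  classical
  obtain ⟨y, hy, rfl⟩ := I_decomp hI₀ hx
  intro p hp
  have := Finsupp.support_finset_sum hp
  rw [Finset.mem_biUnion] at this
  obtain ⟨u, hu, hmem⟩ := this
  have hmem' : p ∈ (ψ (Finsupp.single u 1)).support := Finsupp.support_smul hmem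
  obtain ⟨E, hE, hEsupp⟩ := memT_structure hnm hψ u
  rw [hE] at hmem'
  have h2 := Finsupp.support_add hmem'
  rw [Finset.mem_union] at h2
  rcases h2 with h2 | h2
  · have := Finsupp.support_single_subset h2
    rw [Finset.mem_singleton] at this
    rw [this]
    exact (hy u hu).1
  · exact derived_isPath (hy u hu).1 (hEsupp p h2)

/-- Coordinate injectivity : an element of `ψ(I₀)` vanishing on all paths of `I₀`
is zero. -/
theorem I_coord_zero (hnc : Q.NoCycle) (hnm : Q.NoMultipleArrows) [Fintype Q.A]
    (o : Q.PathOrder) {I₀ : Submodule k (List Q.A →₀ k)} (hI₀ : IsMonomialAdmissible Q k I₀)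
    {ψ : Module.End k (List Q.A →₀ k)} (hψ : MemT Q k ψ) {x : List Q.A →₀ k}
    (hx : x ∈ Submodule.map ψ I₀)
    (h0 : ∀ v, Q.IsPath v → Finsupp.single v (1 : k) ∈ I₀ → x v = 0) : x = 0 := by
  classical
  obtain ⟨y, hy, rfl⟩ := I_decomp hI₀ hx
  by_cases hne : y.support.Nonempty
  · exfalso
    obtain ⟨m, hm, hmax⟩ := exists_max_path o y.support hne (fun p hp => (hy p hp).1)
    have hval : (∑ u ∈ y.support, y u • ψ (Finsupp.single u 1)) m = y m := by
      rw [Finsupp.finset_sum_apply]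
      rw [Finset.sum_eq_single_of_mem m hm]
      · rw [Finsupp.smul_apply, memT_coeff_self hnm hψ, smul_eq_mul, mul_one]
      · intro u hu hum
        rw [Finsupp.smul_apply]
        obtain ⟨E, hE, hEsupp⟩ := memT_structure hnm hψ u
        rw [hE, Finsupp.add_apply, Finsupp.single_eq_of_ne (Ne.symm hum)]
        have hEm : E m = 0 := by
          by_contra hc
          have hd : Q.Derived u m := hEsupp m (Finsupp.mem_support_iff.2 hc)
          have h1 : o.lt m u := derived_lt hnc hnm o (hy u hu).1 hd
          have h2 : o.lt u m := hmax u hu hum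
          exact o.irrefl m (hy m hm).1 (o.trans' m u m h1 h2)
        rw [hEm, zero_add, smul_zero]
    have := h0 m (hy m hm).1 (hy m hm).2
    rw [hval] at this
    exact (Finsupp.mem_support_iff.1 hm) this
  · rw [Finset.not_nonempty_iff_eq_empty] at hne
    rw [hne, Finset.sum_empty]

end MainLemmas
section Family

variable {Q : Quiv} {k : Type} [Field k]

theorem exists_dual_family (hnc : Q.NoCycle) (hnm : Q.NoMultipleArrows) [Fintype Q.A]
    (o : Q.PathOrder) {I₀ : Submodule k (List Q.A →₀ k)} (hI₀ : IsMonomialAdmissible Q k I₀)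
    {ψ : Module.End k (List Q.A →₀ k)} (hψ : MemT Q k ψ) :
    ∃ r : List Q.A → (List Q.A →₀ k),
      ∀ u, Q.IsPath u → Finsupp.single u (1 : k) ∈ I₀ →
        r u ∈ Submodule.map ψ I₀ ∧ (r u) u = 1 ∧
        (∀ q ∈ (r u).support, q = u ∨ Q.Derived u q) ∧
        (∀ v, Q.IsPath v → Finsupp.single v (1 : k) ∈ I₀ → v ≠ u → (r u) v = 0) := by
  classical
  set P : List Q.A → Prop := fun u => Q.IsPath u ∧ Finsupp.single u (1 : k) ∈ I₀ with hP
  have hfin : {u | P u}.Finite := (paths_finite hnc).subset (fun u hu => hu.1)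
  set S : Finset (List Q.A) := hfin.toFinset with hS
  have hSmem : ∀ u, u ∈ S ↔ P u := fun u => Set.Finite.mem_toFinset _
  set Inv : (List Q.A →₀ k) → List Q.A → Prop := fun f u =>
    f ∈ Submodule.map ψ I₀ ∧ f u = 1 ∧
    (∀ q ∈ f.support, q = u ∨ Q.Derived u q) ∧
    (∀ v, P v → v ≠ u → f v = 0) with hInv
  have main : ∀ n u, P u → (S.filter (fun v => o.lt v u)).card < n → ∃ f, Inv f u := by
    intro n
    induction n with
    | zero => intro u _ h; omega
    | succ n ih =>
        intro u hu hrk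
        have hex : ∀ v ∈ S.filter (fun v => o.lt v u), ∃ f, Inv f v := by
          intro v hv
          rw [Finset.mem_filter] at hv
          have hvS := (hSmem v).1 hv.1
          apply ih v hvS
          have hss : S.filter (fun w => o.lt w v) ⊂ S.filter (fun w => o.lt w u) := by
            rw [Finset.ssubset_iff_of_subset]
            · refine ⟨v, Finset.mem_filter.2 ⟨hv.1, hv.2⟩, ?_⟩
              intro hc
              rw [Finset.mem_filter] at hc
              exact o.irrefl v hvS.1 hc.2
            · intro w hw
              rw [Finset.mem_filter] at hw ⊢
              exact ⟨hw.1, o.trans' w v u hw.2 hv.2⟩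
          have := Finset.card_lt_card hss
          omega
        choose g hg using hex
        have hg'ex : ∃ g' : List Q.A → (List Q.A →₀ k),
            ∀ v ∈ S.filter (fun w => o.lt w u), Inv (g' v) v := by
          refine ⟨fun v => if h : v ∈ S.filter (fun w => o.lt w u) then g v h else 0, ?_⟩
          intro v hv
          simp only [dif_pos hv]
          exact hg v hv
        obtain ⟨g', hg'spec⟩ := hg'ex
        obtain ⟨E, hE, hEsupp⟩ := memT_structure hnm hψ u
        set F := S.filter (fun w => o.lt w u) with hF
        have hFne : ∀ v ∈ F, v ≠ u := by
          intro v hv hc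
          rw [hF, Finset.mem_filter] at hv
          exact o.irrefl u hu.1 (hc ▸ hv.2)
        refine ⟨ψ (Finsupp.single u 1) - ∑ v ∈ F, (ψ (Finsupp.single u 1)) v • g' v,
          ?_, ?_, ?_, ?_⟩
        · apply Submodule.sub_mem
          · exact Submodule.mem_map_of_mem hu.2
          · apply Submodule.sum_smul_mem
            intro v hv
            exact (hg'spec v hv).1
        · have hsum : (∑ v ∈ F, (ψ (Finsupp.single u 1)) v • g' v) u = 0 := by
            rw [Finsupp.finset_sum_apply]
            apply Finset.sum_eq_zero
            intro v hv
            rw [Finsupp.smul_apply, (hg'spec v hv).2.2.2 u hu (Ne.symm (hFne v hv)), smul_zero]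
          rw [Finsupp.sub_apply, hsum, sub_zero, memT_coeff_self hnm hψ u]
        · intro q hq
          have h1 := Finsupp.support_sub hq
          rw [Finset.mem_union] at h1
          rcases h1 with h1 | h1
          · rw [hE] at h1
            have h2 := Finsupp.support_add h1
            rw [Finset.mem_union] at h2
            rcases h2 with h2 | h2
            · left; exact Finset.mem_singleton.1 (Finsupp.support_single_subset h2)
            · right; exact hEsupp q h2
          · have h2 := Finsupp.support_finset_sum h1
            rw [Finset.mem_biUnion] at h2
            obtain ⟨v, hv, hmem⟩ := h2
            have hcv : (ψ (Finsupp.single u 1)) v ≠ 0 := by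
              intro hc0
              rw [hc0, zero_smul] at hmem
              simp at hmem
            have hvne : v ≠ u := hFne v hv
            have hvder : Q.Derived u v := by
              rw [hE, Finsupp.add_apply, Finsupp.single_eq_of_ne hvne, zero_add] at hcv
              exact hEsupp v (Finsupp.mem_support_iff.2 hcv)
            have hmem' : q ∈ (g' v).support := Finsupp.support_smul hmem
            rcases (hg'spec v hv).2.2.1 q hmem' with rfl | hd
            · right; exact hvder
            · right; exact derived_trans hnm hvder hd
        · intro v₀ hv₀P hne0
          rw [Finsupp.sub_apply, Finsupp.finset_sum_apply]
          by_cases hlt : o.lt v₀ u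
          · have hv₀F : v₀ ∈ F := Finset.mem_filter.2 ⟨(hSmem v₀).2 hv₀P, hlt⟩
            rw [Finset.sum_eq_single_of_mem v₀ hv₀F]
            · rw [Finsupp.smul_apply, (hg'spec v₀ hv₀F).2.1, smul_eq_mul, mul_one, sub_self]
            · intro b hb hbne
              rw [Finsupp.smul_apply,
                (hg'spec b hb).2.2.2 v₀ hv₀P (Ne.symm hbne), smul_zero]
          · have hA : (ψ (Finsupp.single u 1)) v₀ = 0 := by
              rw [hE, Finsupp.add_apply, Finsupp.single_eq_of_ne hne0, zero_add]
              by_contra hc0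
              exact hlt (derived_lt hnc hnm o hu.1
                (hEsupp v₀ (Finsupp.mem_support_iff.2 hc0)))
            have hB : ∀ b ∈ F, ((ψ (Finsupp.single u 1)) b • g' b) v₀ = 0 := by
              intro b hb
              have hbne : v₀ ≠ b := by
                intro hc'
                exact hlt (hc' ▸ (Finset.mem_filter.1 hb).2)
              rw [Finsupp.smul_apply, (hg'spec b hb).2.2.2 v₀ hv₀P hbne, smul_zero]
            rw [hA, Finset.sum_eq_zero hB, sub_zero]
  have main' : ∀ u, P u → ∃ f, Inv f u := fun u hu =>
    main ((S.filter (fun v => o.lt v u)).card + 1) u hu (by omega)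
  choose rr hrr using main'
  refine ⟨fun u => if h : P u then rr u h else 0, ?_⟩
  intro u hup huI
  have hu : P u := ⟨hup, huI⟩
  simp only [dif_pos hu]
  obtain ⟨h1, h2, h3, h4⟩ := hrr u hu
  exact ⟨h1, h2, h3, fun v hv1 hv2 hne => h4 v ⟨hv1, hv2⟩ hne⟩

end Family
section GBMonomial

variable {Q : Quiv} {k : Type} [Field k]

theorem GB_monomial_eq (o : Q.PathOrder) {I₀ : Submodule k (List Q.A →₀ k)}
    (hI₀ : IsMonomialAdmissible Q k I₀) {B₀ : Set (List Q.A →₀ k)}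
    (hB₀ : IsGB Q k o I₀ B₀) :
    B₀ = {r : List Q.A →₀ k | ∃ p : List Q.A,
      Q.IsPath p ∧ Finsupp.single p (1 : k) ∈ I₀ ∧ r = Finsupp.single p 1} := by
  classical
  have hfwd : ∀ r ∈ B₀, ∃ p : List Q.A,
      Q.IsPath p ∧ Finsupp.single p (1 : k) ∈ I₀ ∧ r = Finsupp.single p 1 := by
    intro r hr
    obtain ⟨m, hm, hm1, hmlt, hmred⟩ := hB₀.2.2 r hr
    have hrI : r ∈ I₀ := hB₀.1 hr
    have hmpath : Q.IsPath m := (hI₀.1 r hrI m hm).1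
    have hmI : Finsupp.single m (1 : k) ∈ I₀ := hI₀.2.2.1 r hrI m hm
    refine ⟨m, hmpath, hmI, ?_⟩
    have hsI : r - Finsupp.single m 1 ∈ I₀ := Submodule.sub_mem _ hrI hmI
    rw [← hB₀.2.1] at hsI
    obtain ⟨c, hcsub, hcsum⟩ := Submodule.mem_span_set.1 hsI
    have hcoeff : ∀ b ∈ c.support, c b = 0 := by
      intro b hb
      have hbB : b ∈ B₀ := hcsub hb
      obtain ⟨mb, hmb, hmb1, hmblt, hmbred⟩ := hB₀.2.2 b hbB
      have hval : (r - Finsupp.single m 1 : List Q.A →₀ k) mb = c b := by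
        rw [← hcsum]
        show (∑ b' ∈ c.support, c b' • b') mb = c b
        rw [Finsupp.finset_sum_apply, Finset.sum_eq_single_of_mem b hb]
        · rw [Finsupp.smul_apply, hmb1, smul_eq_mul, mul_one]
        · intro b' hb' hne
          rw [Finsupp.smul_apply, hmbred b' (hcsub hb') hne, smul_zero]
      rw [← hval, Finsupp.sub_apply]
      by_cases hbr : b = r
      · subst hbr
        have hmm : m = mb := by
          by_cases h : m = mb
          · exact h
          · exfalso
            have h1 := hmlt mb hmb (fun hc => h hc.symm)
            have h2 := hmblt m hm h
            exact o.irrefl m hmpath (o.trans' m mb m h2 h1)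
        rw [← hmm, hm1, Finsupp.single_eq_same]
        ring
      · have h1 : r mb = 0 := hmbred r hr (fun hc => hbr hc.symm)
        have h2 : mb ≠ m := by
          intro hc
          apply Finsupp.mem_support_iff.1 hmb
          have := hmred b hbB hbr
          rw [← hc] at this
          exact this
        rw [h1, Finsupp.single_eq_of_ne h2]
        ring
    have hs0 : r - Finsupp.single m 1 = 0 := by
      rw [← hcsum]
      show (∑ b' ∈ c.support, c b' • b') = 0
      apply Finset.sum_eq_zero
      intro b hb
      rw [hcoeff b hb, zero_smul]
    have := sub_eq_zero.1 hs0
    exact this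
  apply Set.eq_of_subset_of_subset
  · intro r hr
    exact hfwd r hr
  · rintro r ⟨p, hp, hpI, rfl⟩
    have hmem : Finsupp.single p (1 : k) ∈ Submodule.span k B₀ := by
      rw [hB₀.2.1]; exact hpI
    obtain ⟨c, hcsub, hcsum⟩ := Submodule.mem_span_set.1 hmem
    have hval : (∑ b' ∈ c.support, c b' • b') p = 1 := by
      have : (Finsupp.single p (1 : k)) p = 1 := Finsupp.single_eq_same
      rw [← this, ← hcsum]
      rfl
    have hne : (∑ b' ∈ c.support, (c b' • b') p) ≠ 0 := by
      rw [← Finsupp.finset_sum_apply, hval]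
      exact one_ne_zero
    obtain ⟨b₀, hb₀, hb₀ne⟩ := Finset.exists_ne_zero_of_sum_ne_zero hne
    have hb₀B : b₀ ∈ B₀ := hcsub hb₀
    obtain ⟨p₀, hp₀, hp₀I, hb₀eq⟩ := hfwd b₀ hb₀B
    have hb₀p : b₀ p ≠ 0 := by
      intro hc
      rw [Finsupp.smul_apply, hc, smul_zero] at hb₀ne
      exact hb₀ne rfl
    have : p₀ = p := by
      by_contra hc
      rw [hb₀eq, Finsupp.single_eq_of_ne (Ne.symm hc)] at hb₀p
      exact hb₀p rfl
    rw [← this, ← hb₀eq]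
    exact hb₀B

end GBMonomial
/-- Let `ψ ∈ T` and `I := ψ(I_0)`, and let `B₀`, `B` be the Gröbner bases
of `I_0`, `I` with respect to `<`.  Then: (1) `B₀` is exactly the set of paths lying in
`I_0`; (2) the map `B → B₀`, `r ↦ max(supp r)` is well defined and bijective; (3) for
`r ∈ B` with leading path `m`, every path of `supp(r − m)` is derived of `m`. -/
theorem stmt_17 (Q : Quiv) [Fintype Q.V] [Fintype Q.A]
    (k : Type) [Field k] [IsAlgClosed k]
    (hnc : Q.NoCycle) (hnm : Q.NoMultipleArrows) (o : Q.PathOrder)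
    (I₀ : Submodule k (List Q.A →₀ k)) (hI₀ : IsMonomialAdmissible Q k I₀)
    (ψ : Module.End k (List Q.A →₀ k)) (hψ : MemT Q k ψ)
    (B₀ B : Set (List Q.A →₀ k))
    (hB₀ : IsGB Q k o I₀ B₀) (hB : IsGB Q k o (Submodule.map ψ I₀) B) :
    (B₀ = {r : List Q.A →₀ k | ∃ p : List Q.A,
      Q.IsPath p ∧ Finsupp.single p (1 : k) ∈ I₀ ∧ r = Finsupp.single p 1}) ∧
    (∀ r ∈ B, ∃ m : List Q.A, IsMaxPath Q k o r m ∧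
      Finsupp.single m (1 : k) ∈ B₀ ∧
      ∀ p ∈ (r - Finsupp.single m (1 : k)).support, Q.Derived m p) ∧
    (∀ r ∈ B, ∀ r' ∈ B, ∀ m : List Q.A,
      IsMaxPath Q k o r m → IsMaxPath Q k o r' m → r = r') ∧
    (∀ p : List Q.A, Q.IsPath p → Finsupp.single p (1 : k) ∈ I₀ →
      ∃ r ∈ B, IsMaxPath Q k o r p) := by
  classical
  set I : Submodule k (List Q.A →₀ k) := Submodule.map ψ I₀ with hIdef
  obtain ⟨r, hr⟩ := exists_dual_family hnc hnm o hI₀ hψ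
  have hpart1 := GB_monomial_eq o hI₀ hB₀
  have hfinP : {u : List Q.A | Q.IsPath u ∧ Finsupp.single u (1:k) ∈ I₀}.Finite :=
    (paths_finite hnc).subset (fun u hu => hu.1)
  set SS : Finset (List Q.A) := hfinP.toFinset with hSSdef
  have hSSmem : ∀ u, u ∈ SS ↔ (Q.IsPath u ∧ Finsupp.single u (1:k) ∈ I₀) :=
    fun u => Set.Finite.mem_toFinset _
  have hrP : ∀ u ∈ SS, r u ∈ I ∧ (r u) u = 1 ∧
      (∀ q ∈ (r u).support, q = u ∨ Q.Derived u q) ∧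
      (∀ v ∈ SS, v ≠ u → (r u) v = 0) := by
    intro u hu
    rw [hSSmem] at hu
    obtain ⟨h1, h2, h3, h4⟩ := hr u hu.1 hu.2
    exact ⟨h1, h2, h3, fun v hv hne => by
      rw [hSSmem] at hv; exact h4 v hv.1 hv.2 hne⟩
  have hIpaths : ∀ x ∈ I, ∀ p ∈ (x : List Q.A →₀ k).support, Q.IsPath p :=
    fun x hx => I_support_path hnm hI₀ hψ hx
  have hdecomp : ∀ x ∈ I, x = ∑ v ∈ SS, x v • r v := by
    intro x hx
    have hx' : x - ∑ v ∈ SS, x v • r v ∈ I := by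
      apply Submodule.sub_mem _ hx
      apply Submodule.sum_smul_mem
      intro v hv
      exact (hrP v hv).1
    have h0 : x - ∑ v ∈ SS, x v • r v = 0 := by
      apply I_coord_zero hnc hnm o hI₀ hψ hx'
      intro v₀ hv₀p hv₀I
      have hv₀SS : v₀ ∈ SS := (hSSmem v₀).2 ⟨hv₀p, hv₀I⟩
      rw [Finsupp.sub_apply, Finsupp.finset_sum_apply,
        Finset.sum_eq_single_of_mem v₀ hv₀SS]
      · rw [Finsupp.smul_apply, (hrP v₀ hv₀SS).2.1, smul_eq_mul, mul_one, sub_self]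
      · intro b hb hbne
        rw [Finsupp.smul_apply, (hrP b hb).2.2.2 v₀ hv₀SS (Ne.symm hbne), smul_zero]
    exact (sub_eq_zero.1 h0)
  have hlead : ∀ b, b ∈ B → ∃ m, m ∈ b.support ∧ b m = 1 ∧
      (∀ p ∈ b.support, p ≠ m → o.lt p m) ∧ ∀ r' ∈ B, r' ≠ b → r' m = 0 := hB.2.2
  choose leadB hlead1 hlead2 hlead3 hlead4 using hlead
  have hexistsB : ∀ v ∈ SS, ∃ b, ∃ hb : b ∈ B, leadB b hb = v := by
    intro v hv
    have hvP := (hSSmem v).1 hv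
    have hrvI : r v ∈ I := (hrP v hv).1
    have hrvspan : r v ∈ Submodule.span k B := by rw [hB.2.1]; exact hrvI
    obtain ⟨c, hcsub, hcsum⟩ := Submodule.mem_span_set.1 hrvspan
    have hrv1 : (r v) v = 1 := (hrP v hv).2.1
    have hcne : c.support.Nonempty := by
      rw [Finset.nonempty_iff_ne_empty]
      intro hc
      have hz : r v = 0 := by
        rw [← hcsum]
        show (∑ b' ∈ c.support, c b' • b') = 0
        rw [hc, Finset.sum_empty]
      rw [hz] at hrv1
      simp at hrv1
    set L : Finset (List Q.A) := c.support.attach.image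
      (fun b => leadB b.1 (hcsub b.2)) with hLdef
    have hLpaths : ∀ p ∈ L, Q.IsPath p := by
      intro p hp
      rw [hLdef, Finset.mem_image] at hp
      obtain ⟨b, hb, rfl⟩ := hp
      exact hIpaths b.1 (hB.1 (hcsub b.2)) _ (hlead1 b.1 (hcsub b.2))
    have hLne : L.Nonempty := by
      obtain ⟨b, hb⟩ := hcne
      exact ⟨leadB b (hcsub hb), Finset.mem_image.2 ⟨⟨b, hb⟩, Finset.mem_attach _ _, rfl⟩⟩
    obtain ⟨m, hmL, hmmax⟩ := exists_max_path o L hLne hLpaths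
    rw [hLdef, Finset.mem_image] at hmL
    obtain ⟨⟨b₀, hb₀c⟩, -, hb₀lead⟩ := hmL
    have hb₀B : b₀ ∈ B := hcsub hb₀c
    have hm1 : b₀ m = 1 := by rw [← hb₀lead]; exact hlead2 b₀ hb₀B
    have hmred : ∀ r' ∈ B, r' ≠ b₀ → r' m = 0 := by
      intro r' ha hb'; rw [← hb₀lead]; exact hlead4 b₀ hb₀B r' ha hb'
    have hmsupp : m ∈ b₀.support := by rw [← hb₀lead]; exact hlead1 b₀ hb₀B
    have hvalm : (r v) m = c b₀ := by
      rw [← hcsum]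
      show (∑ b' ∈ c.support, c b' • b') m = c b₀
      rw [Finsupp.finset_sum_apply, Finset.sum_eq_single_of_mem b₀ hb₀c]
      · rw [Finsupp.smul_apply, hm1, smul_eq_mul, mul_one]
      · intro b' hb' hne
        rw [Finsupp.smul_apply, hmred b' (hcsub hb') hne, smul_zero]
    have hcb₀ : c b₀ ≠ 0 := Finsupp.mem_support_iff.1 hb₀c
    have hmsupprv : m ∈ (r v).support :=
      Finsupp.mem_support_iff.2 (by rw [hvalm]; exact hcb₀)
    have hmv : m = v ∨ o.lt m v := by
      rcases (hrP v hv).2.2.1 m hmsupprv with h | h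
      · left; exact h
      · right; exact derived_lt hnc hnm o hvP.1 h
    have hvm : v = m ∨ o.lt v m := by
      have hvsupp : (r v) v ≠ 0 := by rw [hrv1]; exact one_ne_zero
      have hsum : (∑ b' ∈ c.support, (c b' • b') v) ≠ 0 := by
        rw [← Finsupp.finset_sum_apply]
        show (∑ b' ∈ c.support, c b' • b') v ≠ 0
        have : (∑ b' ∈ c.support, c b' • b') = r v := hcsum
        rw [this]
        exact hvsupp
      obtain ⟨b₁, hb₁c, hb₁ne⟩ := Finset.exists_ne_zero_of_sum_ne_zero hsum
      have hb₁B : b₁ ∈ B := hcsub hb₁c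
      have hb₁v : v ∈ b₁.support := by
        rw [Finsupp.mem_support_iff]
        intro hc
        rw [Finsupp.smul_apply, hc, smul_zero] at hb₁ne
        exact hb₁ne rfl
      have h1 : v = leadB b₁ hb₁B ∨ o.lt v (leadB b₁ hb₁B) := by
        by_cases h : v = leadB b₁ hb₁B
        · left; exact h
        · right; exact hlead3 b₁ hb₁B v hb₁v h
      have hm₁L : leadB b₁ hb₁B ∈ L :=
        Finset.mem_image.2 ⟨⟨b₁, hb₁c⟩, Finset.mem_attach _ _, rfl⟩
      have h2 : leadB b₁ hb₁B = m ∨ o.lt (leadB b₁ hb₁B) m := by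
        by_cases h : leadB b₁ hb₁B = m
        · left; exact h
        · right; exact hmmax _ hm₁L h
      rcases h1 with h1 | h1
      · rw [h1]; exact h2
      · rcases h2 with h2 | h2
        · right; rw [← h2]; exact h1
        · right; exact o.trans' v _ m h1 h2
    have hveq : v = m := lt_antisym o hvP.1 hvm hmv
    exact ⟨b₀, hb₀B, by rw [hveq]; exact hb₀lead⟩
  have hstep5 : ∀ b (hb : b ∈ B), leadB b hb ∈ SS ∧ b = r (leadB b hb) := by
    intro b hb
    have hbI : b ∈ I := hB.1 hb
    have hdec := hdecomp b hbI
    have hmsupp := hlead1 b hb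
    have hmem0 : leadB b hb ∈ (∑ v ∈ SS, b v • r v).support := by
      rw [← hdec]; exact hmsupp
    have h2 := Finsupp.support_finset_sum hmem0
    rw [Finset.mem_biUnion] at h2
    obtain ⟨v₁, hv₁SS, hmem⟩ := h2
    have hbv₁ : b v₁ ≠ 0 := by
      intro hc; rw [hc, zero_smul] at hmem; simp at hmem
    have hmem' : leadB b hb ∈ (r v₁).support := Finsupp.support_smul hmem
    have hmpath : Q.IsPath (leadB b hb) := hIpaths b hbI _ hmsupp
    have hv₁P := (hSSmem v₁).1 hv₁SS
    have h3 : leadB b hb = v₁ ∨ o.lt (leadB b hb) v₁ := by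
      rcases (hrP v₁ hv₁SS).2.2.1 _ hmem' with h | h
      · left; exact h
      · right; exact derived_lt hnc hnm o hv₁P.1 h
    have hv₁supp : v₁ ∈ b.support := Finsupp.mem_support_iff.2 hbv₁
    have h4 : v₁ = leadB b hb ∨ o.lt v₁ (leadB b hb) := by
      by_cases h : v₁ = leadB b hb
      · left; exact h
      · right; exact hlead3 b hb v₁ hv₁supp h
    have hveq : leadB b hb = v₁ := lt_antisym o hmpath h3 h4
    have hmSS : leadB b hb ∈ SS := by rw [hveq]; exact hv₁SS
    refine ⟨hmSS, ?_⟩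
    have hbv0 : ∀ v ∈ SS, v ≠ leadB b hb → b v = 0 := by
      intro v hvSS hne
      obtain ⟨bv, hbvB, hbvlead⟩ := hexistsB v hvSS
      have hbvne : bv ≠ b := by
        intro hc
        subst hc
        exact hne hbvlead.symm
      have := hlead4 bv hbvB b hb (Ne.symm hbvne)
      rw [hbvlead] at this
      exact this
    have hfin : (∑ v ∈ SS, b v • r v) = r (leadB b hb) := by
      rw [Finset.sum_eq_single_of_mem (leadB b hb) hmSS]
      · rw [hlead2 b hb, one_smul]
      · intro v hvSS hne
        rw [hbv0 v hvSS hne, zero_smul]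
    rw [← hfin]
    exact hdec
  refine ⟨hpart1, ?_, ?_, ?_⟩
  · intro b hb
    obtain ⟨hmSS, hbeq⟩ := hstep5 b hb
    refine ⟨leadB b hb, ⟨hlead1 b hb, hlead3 b hb⟩, ?_, ?_⟩
    · rw [hpart1]
      have hPm := (hSSmem _).1 hmSS
      exact ⟨leadB b hb, hPm.1, hPm.2, rfl⟩
    · intro p hp
      have hp' : (b - Finsupp.single (leadB b hb) (1:k)) p ≠ 0 :=
        Finsupp.mem_support_iff.1 hp
      rw [Finsupp.sub_apply] at hp'
      by_cases hpm : p = leadB b hb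
      · exfalso
        rw [hpm, hlead2 b hb, Finsupp.single_eq_same] at hp'
        simp at hp'
      · rw [Finsupp.single_eq_of_ne hpm] at hp'
        have hpsupp : p ∈ (r (leadB b hb)).support := by
          rw [← hbeq, Finsupp.mem_support_iff]
          intro hc
          rw [hc] at hp'
          simp at hp'
        rcases (hrP _ hmSS).2.2.1 p hpsupp with h | h
        · exact absurd h hpm
        · exact h
  · intro b hb b' hb' m h1 h2
    have key : ∀ bb (hbb : bb ∈ B), IsMaxPath Q k o bb m → leadB bb hbb = m := by
      intro bb hbb hmax
      obtain ⟨hm1, hm2⟩ := hmax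
      by_cases h : leadB bb hbb = m
      · exact h
      · exfalso
        have l1 : o.lt (leadB bb hbb) m := hm2 _ (hlead1 bb hbb) h
        have l2 : o.lt m (leadB bb hbb) := hlead3 bb hbb m hm1 (fun hc => h hc.symm)
        have hmpath : Q.IsPath m := hIpaths bb (hB.1 hbb) m hm1
        exact o.irrefl m hmpath (o.trans' m _ m l2 l1)
    have e1 := (hstep5 b hb).2
    have e2 := (hstep5 b' hb').2
    rw [key b hb h1] at e1
    rw [key b' hb' h2] at e2
    rw [e1, e2]
  · intro p hp hpI
    have hpSS : p ∈ SS := (hSSmem p).2 ⟨hp, hpI⟩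
    obtain ⟨b, hbB, hblead⟩ := hexistsB p hpSS
    refine ⟨b, hbB, ?_, ?_⟩
    · rw [← hblead]; exact hlead1 b hbB
    · intro q hq hqne
      rw [← hblead] at hqne
      exact hblead ▸ hlead3 b hbB q hq hqne


end Quiv
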